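/- Let $m \geq 2$. Suppose $n_1 + n_2 + \cdots + n_k = 2m+2$ with $2 \leq k$, each $n_i \geq 1$, and each $n_i \leq 2m$. Then $(k!)^2 \cdot d_{n_1} \cdot d_{n_2} \cdots d_{n_k}$ divides $((2m+2)!)^2 \cdot d_{2m}$. -/

import Mathlib

/-!
Passing from `d a` to `d (a + 1)` multiplies by `(a+1)!^3 (a+2)!`, which divides the corresponding
factor for every larger `a`. Hence `d (a + b) * d c ∣ d a * d (b + c)` for `a ≤ c`: mass can be
moved from one part to a part at least as large. For two parts this gives
`d p * d q ∣ 96 * d (p + q - 2)` (`96 = d 2`). For `k ≥ 3` parts of `N = 2m + 2`, shrinking all but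
one part to `1` gives `∏ d (n i) ∣ 2^(k-1) * d (N + 1 - k)`, and each of the `k - 3` steps from
there up to `d (N - 2)` contributes a factor `16`. The leftover constants and `k!^2` are absorbed
by `N!^2`.
-/

/-- `d n = (2! ⋯ n!)^4 * (n+1)!` -/
def d (n : ℕ) : ℕ := (∏ k ∈ Finset.Icc 2 n, Nat.factorial k) ^ 4 * Nat.factorial (n + 1)

open Finset
open scoped Nat

lemma d_succ (a : ℕ) : d (a + 1) = d a * ((a + 1)! ^ 3 * (a + 2)!) := by
  cases a with
  | zero => decide
  | succ b =>
    rw [d, d, prod_Icc_succ_top (by omega : 2 ≤ b + 2)]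
    ring

lemma d_one : d 1 = 2 := by decide

lemma d_two : d 2 = 96 := by decide

lemma factorial_cube_mul_factorial_dvd {a c : ℕ} (h : a ≤ c) :
    (a + 1)! ^ 3 * (a + 2)! ∣ (c + 1)! ^ 3 * (c + 2)! :=
  mul_dvd_mul (pow_dvd_pow_of_dvd (Nat.factorial_dvd_factorial (by omega)) 3)
    (Nat.factorial_dvd_factorial (by omega))

lemma d_add_mul_dvd {a c : ℕ} (h : a ≤ c) (b : ℕ) : d (a + b) * d c ∣ d a * d (b + c) := by
  induction b with
  | zero => simp
  | succ b ih =>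
    rw [← add_assoc, d_succ, show b + 1 + c = b + c + 1 by omega, d_succ]
    calc d (a + b) * ((a + b + 1)! ^ 3 * (a + b + 2)!) * d c
        = d (a + b) * d c * ((a + b + 1)! ^ 3 * (a + b + 2)!) := by ring
      _ ∣ d a * d (b + c) * ((b + c + 1)! ^ 3 * (b + c + 2)!) :=
        mul_dvd_mul ih (factorial_cube_mul_factorial_dvd (by omega))
      _ = d a * (d (b + c) * ((b + c + 1)! ^ 3 * (b + c + 2)!)) := by ring

lemma d_mul_prod_d_succ_dvd {ι : Type*} (s : Finset ι) (f : ι → ℕ) {a : ℕ} (ha : 1 ≤ a) :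
    d a * ∏ i ∈ s, d (f i + 1) ∣ 2 ^ #s * d (a + ∑ i ∈ s, f i) := by
  classical
  induction s using Finset.induction_on generalizing a with
  | empty => simp
  | insert j s hj ih =>
    rw [prod_insert hj, sum_insert hj, card_insert_of_notMem hj]
    have hmerge : d a * d (f j + 1) ∣ 2 * d (a + f j) := by
      have := d_add_mul_dvd ha (f j)
      rwa [d_one, mul_comm, add_comm 1 (f j), add_comm (f j) a] at this
    calc d a * (d (f j + 1) * ∏ i ∈ s, d (f i + 1))
        = d a * d (f j + 1) * ∏ i ∈ s, d (f i + 1) := by ring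
      _ ∣ 2 * (d (a + f j) * ∏ i ∈ s, d (f i + 1)) := by
        rw [← mul_assoc]; exact mul_dvd_mul_right hmerge _
      _ ∣ 2 * (2 ^ #s * d (a + f j + ∑ i ∈ s, f i)) := mul_dvd_mul_left 2 (ih (by omega))
      _ = 2 ^ (#s + 1) * d (a + (f j + ∑ i ∈ s, f i)) := by ring_nf

lemma sixteen_pow_mul_d_dvd {a : ℕ} (ha : 1 ≤ a) (t : ℕ) : 16 ^ t * d a ∣ d (a + t) := by
  induction t with
  | zero => simp
  | succ t ih =>
    have h16 : 16 ∣ (a + t + 1)! ^ 3 * (a + t + 2)! :=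
      mul_dvd_mul (pow_dvd_pow_of_dvd (Nat.dvd_factorial two_pos (by omega)) 3)
        (Nat.dvd_factorial two_pos (by omega))
    rw [← add_assoc, d_succ, pow_succ, mul_right_comm]
    exact mul_dvd_mul ih h16

lemma factorial_sq_mul_two_pow_dvd {k N : ℕ} (hk : 3 ≤ k) (hkN : k ≤ N) (hN : 4 ≤ N) :
    k ! ^ 2 * 2 ^ (k - 1) ∣ N ! ^ 2 * 16 ^ (k - 3) := by
  rcases hk.eq_or_lt with rfl | hk4
  · have h12 : 12 ∣ N ! := (by decide : 12 ∣ 4 !).trans (Nat.factorial_dvd_factorial hN)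
    simpa [Nat.factorial] using pow_dvd_pow_of_dvd h12 2
  · refine mul_dvd_mul (pow_dvd_pow_of_dvd (Nat.factorial_dvd_factorial hkN) 2) ?_
    rw [show 16 = 2 ^ 4 by rfl, ← pow_mul]
    exact pow_dvd_pow 2 (by omega)

lemma factorial_sq_mul_d_mul_d_dvd {p q : ℕ} (hp : 2 ≤ p) (hq : 2 ≤ q) (h6 : 6 ≤ p + q) :
    2 ! ^ 2 * (d p * d q) ∣ (p + q)! ^ 2 * d (p + q - 2) := by
  obtain ⟨b, rfl⟩ := exists_add_of_le hp
  have hmerge := d_add_mul_dvd hq b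
  rw [d_two] at hmerge
  have h384 : 2 ! ^ 2 * 96 ∣ (2 + b + q)! ^ 2 :=
    (by decide : 2 ! ^ 2 * 96 ∣ 6 ! ^ 2).trans
      (pow_dvd_pow_of_dvd (Nat.factorial_dvd_factorial h6) 2)
  rw [show 2 + b + q - 2 = b + q by omega]
  calc 2 ! ^ 2 * (d (2 + b) * d q)
      ∣ 2 ! ^ 2 * 96 * d (b + q) := by rw [mul_assoc]; exact mul_dvd_mul_left _ hmerge
    _ ∣ (2 + b + q)! ^ 2 * d (b + q) := mul_dvd_mul_right h384 _

lemma factorial_sq_mul_prod_d_dvd {k N : ℕ} (hk : 3 ≤ k) (hN : 4 ≤ N) (n : Fin k → ℕ)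
    (hlow : ∀ i, 1 ≤ n i) (hsum : ∑ i, n i = N) :
    k ! ^ 2 * ∏ i, d (n i) ∣ N ! ^ 2 * d (N - 2) := by
  obtain ⟨f, rfl⟩ : ∃ f : Fin k → ℕ, n = fun i => f i + 1 :=
    ⟨fun i => n i - 1, funext fun i => show n i = n i - 1 + 1 by have := hlow i; omega⟩
  have hsumf : ∑ i, f i + k = N := by simpa [sum_add_distrib] using hsum
  have hprod : 2 * ∏ i, d (f i + 1) ∣ 2 * (2 ^ (k - 1) * d (1 + ∑ i, f i)) := by
    rw [← mul_assoc, ← _root_.pow_succ', Nat.sub_add_cancel (by omega)]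
    simpa [d_one] using d_mul_prod_d_succ_dvd univ f le_rfl
  have hgrow := sixteen_pow_mul_d_dvd (a := 1 + ∑ i, f i) (by omega) (k - 3)
  rw [show 1 + ∑ i, f i + (k - 3) = N - 2 by omega] at hgrow
  calc k ! ^ 2 * ∏ i, d (f i + 1)
      ∣ k ! ^ 2 * 2 ^ (k - 1) * d (1 + ∑ i, f i) := by
        rw [mul_assoc]; exact mul_dvd_mul_left _ (Nat.dvd_of_mul_dvd_mul_left two_pos hprod)
    _ ∣ N ! ^ 2 * 16 ^ (k - 3) * d (1 + ∑ i, f i) :=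
        mul_dvd_mul_right (factorial_sq_mul_two_pow_dvd hk (by omega) hN) _
    _ ∣ N ! ^ 2 * d (N - 2) := by rw [mul_assoc]; exact mul_dvd_mul_left _ hgrow

theorem hexagon_denominator_estimate (m k : ℕ) (hm : 2 ≤ m) (hk : 2 ≤ k)
    (n : Fin k → ℕ) (hsum : ∑ i, n i = 2 * m + 2)
    (hlow : ∀ i, 1 ≤ n i) (hhigh : ∀ i, n i ≤ 2 * m) :
    Nat.factorial k ^ 2 * ∏ i, d (n i) ∣
      Nat.factorial (2 * m + 2) ^ 2 * d (2 * m) := by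
  rcases hk.eq_or_lt with rfl | hk3
  · rw [Fin.sum_univ_two] at hsum
    rw [Fin.prod_univ_two]
    have := hhigh 0
    have := hhigh 1
    have := factorial_sq_mul_d_mul_d_dvd (p := n 0) (q := n 1) (by omega) (by omega) (by omega)
    rwa [hsum, show 2 * m + 2 - 2 = 2 * m by omega] at this
  · have := factorial_sq_mul_prod_d_dvd hk3 (by omega) n hlow hsum
    rwa [show 2 * m + 2 - 2 = 2 * m by omega] at this
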